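/- Let Γ be a finite simplicial graph, 𝒢 a collection of non-trivial groups indexed by V(Γ), and Φ, Ψ ⊆ Γ two induced subgraphs. Decompose Φ as a join Φ₀ ∗ Φ₁ and Ψ as a join Ψ₀ ∗ Ψ₁, where Φ₁ and Ψ₁ are complete and where Φ₀ and Ψ₀ are not the star of one of their vertices. Then the Hausdorff distance in X(Γ, 𝒢) between the parabolic subgroups ⟨Φ⟩ and ⟨Ψ⟩ is finite if and only if Φ₀ = Ψ₀. -/

import Mathlib

/-- Word length distance on a group with respect to a generating set `S`. -/
noncomputable def wordDist {G : Type*} [Group G] (S : Set G) (g h : G) : ℕ :=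
  sInf {n : ℕ | ∃ l : List G, l.length = n ∧ (∀ x ∈ l, x ∈ S ∨ x⁻¹ ∈ S) ∧ g⁻¹ * h = l.prod}

/-- The commutation relators defining a graph product. -/
def graphProductRels {V : Type*} (Γ : SimpleGraph V) (G : V → Type*) [∀ v, Group (G v)] :
    Set (Monoid.CoprodI G) :=
  {x | ∃ (u v : V) (a : G u) (b : G v), Γ.Adj u v ∧
    x = Monoid.CoprodI.of a * Monoid.CoprodI.of b * (Monoid.CoprodI.of a)⁻¹ *
      (Monoid.CoprodI.of b)⁻¹}

/-- The graph product of the groups `G v` over the simplicial graph `Γ`. -/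
def graphProduct {V : Type*} (Γ : SimpleGraph V) (G : V → Type*) [∀ v, Group (G v)] : Type _ :=
  Monoid.CoprodI G ⧸ Subgroup.normalClosure (graphProductRels Γ G)

instance {V : Type*} (Γ : SimpleGraph V) (G : V → Type*) [∀ v, Group (G v)] :
    Group (graphProduct Γ G) :=
  QuotientGroup.Quotient.group _

/-- The canonical morphism from a vertex group into the graph product. -/
def gpOf {V : Type*} (Γ : SimpleGraph V) (G : V → Type*) [∀ v, Group (G v)] (u : V) :
    G u →* graphProduct Γ G :=
  (QuotientGroup.mk' _).comp Monoid.CoprodI.of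

/-- The generating set of the graph product given by the union of (images of) the vertex
groups, with the identity removed. -/
def vertexGens {V : Type*} (Γ : SimpleGraph V) (G : V → Type*) [∀ v, Group (G v)] :
    Set (graphProduct Γ G) :=
  ⋃ u : V, (Set.range (gpOf Γ G u) \ {1})

/-- The parabolic subgroup `⟨Λ⟩` generated by the vertex groups of `Λ`. -/
def parabolic {V : Type*} (Γ : SimpleGraph V) (G : V → Type*) [∀ v, Group (G v)] (Λ : Set V) :
    Subgroup (graphProduct Γ G) :=
  Subgroup.closure (⋃ u ∈ Λ, Set.range (gpOf Γ G u))

/-- The word metric on the graph product, with respect to the union of the vertex groups. -/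
noncomputable def gpDist {V : Type*} (Γ : SimpleGraph V) (G : V → Type*) [∀ v, Group (G v)]
    (g h : graphProduct Γ G) : ℝ :=
  (wordDist (vertexGens Γ G) g h : ℝ)
/-- `a b c d` is an induced 4-cycle (induced square) of `Γ`, with diagonals `(a,c)` and `(b,d)`. -/
def IsInducedSquare {V : Type*} (Γ : SimpleGraph V) (a b c d : V) : Prop :=
  Γ.Adj a b ∧ Γ.Adj b c ∧ Γ.Adj c d ∧ Γ.Adj d a ∧ ¬Γ.Adj a c ∧ ¬Γ.Adj b d ∧ a ≠ c ∧ b ≠ d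

/-- A set of vertices is square-complete if every induced square of `Γ` having two opposite
vertices in it lies entirely in it. -/
def SquareComplete {V : Type*} (Γ : SimpleGraph V) (Λ : Set V) : Prop :=
  ∀ a b c d, IsInducedSquare Γ a b c d → a ∈ Λ → c ∈ Λ → b ∈ Λ ∧ d ∈ Λ

/-- `Λ` contains an induced square of `Γ`. -/
def HasInducedSquareIn {V : Type*} (Γ : SimpleGraph V) (Λ : Set V) : Prop :=
  ∃ a b c d, IsInducedSquare Γ a b c d ∧ a ∈ Λ ∧ b ∈ Λ ∧ c ∈ Λ ∧ d ∈ Λ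

/-- A minsquare subgraph: minimal among square-complete subgraphs containing an induced square. -/
def IsMinsquare {V : Type*} (Γ : SimpleGraph V) (Λ : Set V) : Prop :=
  SquareComplete Γ Λ ∧ HasInducedSquareIn Γ Λ ∧
    ∀ Λ' ⊆ Λ, SquareComplete Γ Λ' → HasInducedSquareIn Γ Λ' → Λ' = Λ

/-- A set of vertices spanning a complete subgraph. -/
def IsCompleteSet {V : Type*} (Γ : SimpleGraph V) (S : Set V) : Prop :=
  ∀ a ∈ S, ∀ b ∈ S, a ≠ b → Γ.Adj a b
/-- The Cayley graph of a group with respect to a set `S` of generators. -/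
def cayley {G : Type*} [Group G] (S : Set G) : SimpleGraph G where
  Adj x y := x ≠ y ∧ (x⁻¹ * y ∈ S ∨ y⁻¹ * x ∈ S)
  symm := ⟨by rintro x y ⟨h1, h2⟩; exact ⟨h1.symm, h2.symm⟩⟩
  loopless := ⟨fun x h => h.1 rfl⟩

/-- A connected graph is Gromov hyperbolic: there is `δ ≥ 0` such that all of its geodesic
triangles are `δ`-thin, i.e. every vertex on a geodesic between `x` and `y` is at distance at
most `δ` from a vertex lying on a geodesic from `x` to `z` or on a geodesic from `y` to `z`. -/
def GraphHyperbolic {X : Type*} (G : SimpleGraph X) : Prop :=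
  ∃ δ : ℕ, ∀ x y z p : X, G.dist x p + G.dist p y = G.dist x y →
    ∃ q : X, (G.dist x q + G.dist q z = G.dist x z ∨ G.dist y q + G.dist q z = G.dist y z) ∧
      G.dist p q ≤ δ
/-- The clique number of `Γ`: the maximal number of vertices of a complete subgraph. -/
noncomputable def cliqueNum {V : Type*} (Γ : SimpleGraph V) : ℕ :=
  sSup {n | ∃ s : Finset V, Γ.IsNClique n s}

/-- The Hausdorff distance between `A` and `B` in the graph metric of `G` is at most `C`. -/
def HausdorffLEN {X : Type*} (G : SimpleGraph X) (A B : Set X) (C : ℕ) : Prop :=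
  (∀ a ∈ A, ∃ b ∈ B, G.dist a b ≤ C) ∧ (∀ b ∈ B, ∃ a ∈ A, G.dist a b ≤ C)

/-!
If `Φ₀ = Ψ₀`, an element of `⟨Φ⟩ = ⟨Φ₀⟩ × ⟨Φ₁⟩` is `x₀ x₁` with `x₀ ∈ ⟨Ψ⟩`, and since `Φ₁` is
complete, `x₁` is a product of at most `|Φ₁|` vertex-group elements: `⟨Φ⟩` lies within distance
`|V|` of `⟨Ψ⟩`, and symmetrically.

Conversely, let `u ∈ Φ₀ \ Ψ₀`. As `Φ₀` is not the star of `u`, some `w ∈ Φ₀` is distinct from and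
not adjacent to `u`, and `u`, `w` are not both in `Ψ` (a vertex of `Ψ₁` is adjacent to all of `Ψ`).
Killing every vertex group but `G_u` and `G_w` retracts the graph product onto the free product
`G_u ∗ G_w`. There `⟨Ψ⟩` lands in a single factor while `(a b)ⁿ ∈ ⟨Φ⟩` has reduced length `2n`;
since the reduced length changes by at most one along an edge of the Cayley graph, `(a b)ⁿ` is at
distance at least `2n - 1` from `⟨Ψ⟩`.
-/

namespace Monoid.CoprodI

variable {ι : Type*} {M : ι → Type*} [∀ i, Monoid (M i)]

namespace NeWord

/-- The reduced word `a b a b ⋯ a b` with `n + 1` syllables `a b`. -/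
def alternating {i j : ι} (hij : i ≠ j) {a : M i} {b : M j} (ha : a ≠ 1) (hb : b ≠ 1) :
    ℕ → NeWord M i j
  | 0 => .append (.singleton a ha) hij (.singleton b hb)
  | n + 1 => .append (alternating hij ha hb n) hij.symm (alternating hij ha hb 0)

variable {i j : ι} (hij : i ≠ j) {a : M i} {b : M j} (ha : a ≠ 1) (hb : b ≠ 1)

lemma prod_alternating (n : ℕ) : (alternating hij ha hb n).prod = (of a * of b) ^ (n + 1) := by
  induction n with
  | zero => simp [alternating]
  | succ n ih => simp [alternating, ih, pow_succ _ (n + 1)]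

lemma length_toList_alternating (n : ℕ) :
    (alternating hij ha hb n).toList.length = 2 * (n + 1) := by
  induction n with
  | zero => simp [alternating]
  | succ n ih => simp [alternating, ih, Nat.mul_succ]

end NeWord

variable [∀ i, DecidableEq (M i)]

namespace Word

lemma length_rcons_le {i : ι} (p : Pair M i) :
    (rcons p).toList.length ≤ p.tail.toList.length + 1 := by
  unfold rcons
  split_ifs <;> simp

lemma length_tail_le_length_rcons {i : ι} (p : Pair M i) :
    p.tail.toList.length ≤ (rcons p).toList.length := by
  unfold rcons
  split_ifs <;> simp

lemma length_of_smul_le [DecidableEq ι] {i : ι} (m : M i) (w : Word M) :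
    (of m • w).toList.length ≤ w.toList.length + 1 := by
  have hw : rcons (equivPair i w) = w := by
    rw [← equivPair_symm, Equiv.symm_apply_apply]
  have htail := length_tail_le_length_rcons (equivPair i w)
  rw [hw] at htail
  rw [of_smul_def]
  exact (length_rcons_le _).trans (Nat.add_le_add_right htail 1)

end Word

variable [DecidableEq ι]

noncomputable def reducedLength (x : CoprodI M) : ℕ :=
  (Word.equiv x).toList.length

@[simp]
lemma reducedLength_one : reducedLength (1 : CoprodI M) = 0 := by
  simp [reducedLength, Word.equiv, Word.empty]

lemma reducedLength_of_mul_le {i : ι} (m : M i) (x : CoprodI M) :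
    reducedLength (of m * x) ≤ reducedLength x + 1 := by
  simpa [reducedLength, Word.equiv, mul_smul] using Word.length_of_smul_le m (x • Word.empty)

lemma reducedLength_of_le_one {i : ι} (m : M i) : reducedLength (of m) ≤ 1 := by
  simpa using reducedLength_of_mul_le m 1

lemma NeWord.reducedLength_prod {i j : ι} (w : NeWord M i j) :
    reducedLength w.prod = w.toList.length :=
  congrArg (fun w : Word M => w.toList.length) (Word.equiv.apply_symm_apply w.toWord)

lemma reducedLength_pow_of_mul_of {i j : ι} (hij : i ≠ j) {a : M i} {b : M j} (ha : a ≠ 1)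
    (hb : b ≠ 1) (n : ℕ) : reducedLength ((of a * of b) ^ n) = 2 * n := by
  cases n with
  | zero => simp
  | succ n =>
    rw [← NeWord.prod_alternating hij ha hb, NeWord.reducedLength_prod,
      NeWord.length_toList_alternating]

end Monoid.CoprodI

lemma SimpleGraph.Reachable.le_add_dist {X : Type*} {Γ : SimpleGraph X} {f : X → ℕ}
    (hf : ∀ x y, Γ.Adj x y → f x ≤ f y + 1) {x y : X} (h : Γ.Reachable x y) :
    f x ≤ f y + Γ.dist x y := by
  obtain ⟨p, hp⟩ := h.exists_walk_length_eq_dist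
  rw [← hp]
  clear hp h
  induction p with
  | nil => simp
  | cons hadj p ih =>
    rw [SimpleGraph.Walk.length_cons]
    linarith [hf _ _ hadj]

section Cayley

variable {Gr : Type*} [Group Gr] {S : Set Gr}

lemma cayley_reachable_mul {g : Gr} (hg : g ∈ Subgroup.closure S) (x : Gr) :
    (cayley S).Reachable x (x * g) := by
  induction hg using Subgroup.closure_induction generalizing x with
  | mem s hs =>
    by_cases hx : x = x * s
    · rw [← hx]
    · exact SimpleGraph.Adj.reachable ⟨hx, Or.inl (by simpa using hs)⟩
  | one => simp
  | mul a b _ _ ha hb => simpa [mul_assoc] using (ha x).trans (hb (x * a))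
  | inv a _ ha => simpa using (ha (x * a⁻¹)).symm

lemma cayley_connected (hS : Subgroup.closure S = ⊤) : (cayley S).Connected :=
  SimpleGraph.Connected.mk fun x y => by
    simpa using cayley_reachable_mul (g := x⁻¹ * y) (by simp [hS]) x

lemma cayley_dist_mul_le_one {s : Gr} (hs : s ∈ insert 1 S) (x : Gr) :
    (cayley S).dist x (x * s) ≤ 1 := by
  by_cases hx : x = x * s
  · simp [← hx]
  · have hs' : s ∈ S := hs.resolve_left (by rintro rfl; simp at hx)
    have hadj : (cayley S).Adj x (x * s) := ⟨hx, Or.inl (by simpa using hs')⟩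
    exact (SimpleGraph.dist_eq_one_iff_adj.2 hadj).le

end Cayley

section GraphProduct

open Monoid

variable {V : Type*} {Γ : SimpleGraph V} {G : V → Type*} [∀ v, Group (G v)]

lemma gpOf_commute_of_adj {p q : V} (h : Γ.Adj p q) (a : G p) (b : G q) :
    Commute (gpOf Γ G p a) (gpOf Γ G q b) := by
  rw [← commutatorElement_eq_one_iff_commute]
  exact (QuotientGroup.eq_one_iff _).2 (Subgroup.subset_normalClosure ⟨p, q, a, b, h, rfl⟩)

def graphProduct.lift {H : Type*} [Group H] (f : ∀ p, G p →* H)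
    (hf : ∀ p q, Γ.Adj p q → ∀ a b, Commute (f p a) (f q b)) : graphProduct Γ G →* H :=
  QuotientGroup.lift _ (CoprodI.lift f) <| Subgroup.normalClosure_le_normal <| by
    rintro _ ⟨p, q, a, b, hpq, rfl⟩
    simpa [commutatorElement_def] using commutatorElement_eq_one_iff_commute.2 (hf p q hpq a b)

@[simp]
lemma graphProduct.lift_gpOf {H : Type*} [Group H] (f : ∀ p, G p →* H)
    (hf : ∀ p q, Γ.Adj p q → ∀ a b, Commute (f p a) (f q b)) {p : V} (a : G p) :
    graphProduct.lift f hf (gpOf Γ G p a) = f p a :=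
  CoprodI.lift_of f a

lemma range_gpOf_subset (u : V) : Set.range (gpOf Γ G u) ⊆ insert 1 (vertexGens Γ G) := by
  rintro _ ⟨g, rfl⟩
  by_cases hg : gpOf Γ G u g = 1
  · exact .inl hg
  · exact .inr (Set.mem_iUnion.2 ⟨u, ⟨g, rfl⟩, hg⟩)

lemma closure_vertexGens : Subgroup.closure (vertexGens Γ G) = ⊤ := by
  refine (Subgroup.eq_top_iff' _).2 fun x => ?_
  obtain ⟨y, rfl⟩ := QuotientGroup.mk'_surjective _ x
  induction y using CoprodI.induction_on with
  | one => exact one_mem _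
  | of u m =>
    rcases range_gpOf_subset _ ⟨m, rfl⟩ with h | h
    · exact h ▸ one_mem _
    · exact Subgroup.subset_closure h
  | mul x y hx hy => rw [map_mul]; exact mul_mem hx hy

lemma gpOf_mem_parabolic {Λ : Set V} {u : V} (hu : u ∈ Λ) (g : G u) :
    gpOf Γ G u g ∈ parabolic Γ G Λ :=
  Subgroup.subset_closure (Set.mem_biUnion hu ⟨g, rfl⟩)

lemma parabolic_mono {P Q : Set V} (h : P ⊆ Q) : parabolic Γ G P ≤ parabolic Γ G Q :=
  Subgroup.closure_mono (Set.biUnion_subset_biUnion_left h)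

lemma parabolic_union (P Q : Set V) :
    parabolic Γ G (P ∪ Q) = parabolic Γ G P ⊔ parabolic Γ G Q := by
  rw [parabolic, Set.biUnion_union, Subgroup.closure_union]
  rfl

@[simp]
lemma parabolic_empty : parabolic Γ G ∅ = ⊥ := by
  simp [parabolic]

lemma parabolic_singleton (u : V) : parabolic Γ G {u} = (gpOf Γ G u).range := by
  rw [parabolic, Set.biUnion_singleton, ← MonoidHom.coe_range, Subgroup.closure_eq]

lemma parabolic_le_centralizer_of_join {P Q : Set V} (hjoin : ∀ p ∈ P, ∀ q ∈ Q, Γ.Adj p q) :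
    parabolic Γ G P ≤ Subgroup.centralizer (parabolic Γ G Q) := by
  rw [parabolic, Subgroup.closure_le, parabolic, Subgroup.centralizer_closure]
  simp only [Set.iUnion_subset_iff]
  rintro p hp _ ⟨a, rfl⟩ _ hy
  simp only [Set.mem_iUnion] at hy
  obtain ⟨q, hq, b, rfl⟩ := hy
  exact (gpOf_commute_of_adj (hjoin p hp q hq) a b).symm.eq

lemma exists_mul_eq_of_mem_parabolic_union {P Q : Set V}
    (hjoin : ∀ p ∈ P, ∀ q ∈ Q, Γ.Adj p q) {x : graphProduct Γ G}
    (hx : x ∈ parabolic Γ G (P ∪ Q)) :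
    ∃ y ∈ parabolic Γ G P, ∃ z ∈ parabolic Γ G Q, y * z = x := by
  rw [parabolic_union, ← SetLike.mem_coe, Subgroup.coe_mul_of_left_le_normalizer_right _ _
    ((parabolic_le_centralizer_of_join hjoin).trans (Subgroup.centralizer_le_normalizer _))] at hx
  exact hx

lemma dist_mul_le_card_of_mem_parabolic (S : Finset V) (hS : IsCompleteSet Γ S)
    {y : graphProduct Γ G} (hy : y ∈ parabolic Γ G S) (x : graphProduct Γ G) :
    (cayley (vertexGens Γ G)).dist x (x * y) ≤ S.card := by
  classical
  induction S using Finset.induction_on generalizing y x with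
  | empty => simp_all
  | insert w S hw ih =>
    have hjoin : ∀ p ∈ ({w} : Set V), ∀ q ∈ (S : Set V), Γ.Adj p q := by
      rintro p rfl q hq
      exact hS p (by simp) q (by simp [hq]) (by rintro rfl; exact hw hq)
    rw [Finset.coe_insert, Set.insert_eq] at hy
    obtain ⟨g, hg, k, hk, rfl⟩ := exists_mul_eq_of_mem_parabolic_union hjoin hy
    rw [parabolic_singleton] at hg
    calc (cayley (vertexGens Γ G)).dist x (x * (g * k))
        ≤ (cayley (vertexGens Γ G)).dist x (x * g) +
            (cayley (vertexGens Γ G)).dist (x * g) (x * g * k) := by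
          rw [← mul_assoc]
          exact (cayley_connected closure_vertexGens).dist_triangle
      _ ≤ 1 + S.card := by
          gcongr
          · exact cayley_dist_mul_le_one (range_gpOf_subset w hg) x
          · exact ih (fun a ha b hb => hS a (by simp [ha]) b (by simp [hb])) hk _
      _ = (insert w S).card := by rw [Finset.card_insert_of_notMem hw, add_comm]

end GraphProduct

section Retraction

open Monoid CoprodI

variable {V : Type*} {Γ : SimpleGraph V} {G : V → Type*} [∀ v, Group (G v)]

open Classical in
noncomputable def retractionLetter (S : Set V) (p : V) : G p →* CoprodI (fun s : S => G s) :=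
  if h : p ∈ S then of (M := fun s : S => G s) (i := ⟨p, h⟩) else 1

lemma retractionLetter_of_mem {S : Set V} {p : V} (h : p ∈ S) (a : G p) :
    retractionLetter S p a = of (i := (⟨p, h⟩ : S)) a := by
  simp [retractionLetter, h]

lemma retractionLetter_of_notMem {S : Set V} {p : V} (h : p ∉ S) (a : G p) :
    retractionLetter S p a = 1 := by
  simp [retractionLetter, h]

noncomputable def retraction (S : Set V) (hS : Γ.IsIndepSet S) :
    graphProduct Γ G →* CoprodI (fun s : S => G s) :=
  graphProduct.lift (retractionLetter S) fun p q hpq a b => by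
    by_cases hp : p ∈ S
    · by_cases hq : q ∈ S
      · exact absurd hpq (hS hp hq hpq.ne)
      · simp [retractionLetter_of_notMem hq]
    · simp [retractionLetter_of_notMem hp]

variable {S : Set V} (hS : Γ.IsIndepSet S)

@[simp]
lemma retraction_gpOf {p : V} (a : G p) :
    retraction S hS (gpOf Γ G p a) = retractionLetter S p a :=
  graphProduct.lift_gpOf _ _ a

lemma retraction_mem_range_of_mem_parabolic {Λ : Set V} (s : S) (hΛ : Λ ∩ S ⊆ {(s : V)})
    {x : graphProduct Γ G} (hx : x ∈ parabolic Γ G Λ) :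
    retraction S hS x ∈ (of (M := fun s : S => G s) (i := s)).range := by
  suffices parabolic Γ G Λ ≤ (of (i := s)).range.comap (retraction S hS) from this hx
  rw [parabolic, Subgroup.closure_le]
  simp only [Set.iUnion_subset_iff]
  rintro p hp _ ⟨a, rfl⟩
  by_cases hpS : p ∈ S
  · obtain rfl : p = s := hΛ ⟨hp, hpS⟩
    exact ⟨a, by simp [retractionLetter_of_mem hpS]⟩
  · exact ⟨1, by simp [retractionLetter_of_notMem hpS]⟩

variable [DecidableEq V] [∀ v, DecidableEq (G v)]

lemma reducedLength_retraction_gpOf_mul_le {p : V} (a : G p) (z : graphProduct Γ G) :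
    reducedLength (retraction S hS (gpOf Γ G p a * z)) ≤ reducedLength (retraction S hS z) + 1 := by
  rw [map_mul, retraction_gpOf]
  by_cases hp : p ∈ S
  · rw [retractionLetter_of_mem hp]
    exact reducedLength_of_mul_le _ _
  · rw [retractionLetter_of_notMem hp, one_mul]
    exact Nat.le_succ _

lemma reducedLength_retraction_le_one {Λ : Set V} (s : S) (hΛ : Λ ∩ S ⊆ {(s : V)})
    {x : graphProduct Γ G} (hx : x ∈ parabolic Γ G Λ) :
    reducedLength (retraction S hS x) ≤ 1 := by
  obtain ⟨m, hm⟩ := retraction_mem_range_of_mem_parabolic hS s hΛ hx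
  rw [← hm]
  exact reducedLength_of_le_one (M := fun s : S => G s) m

lemma reducedLength_retraction_pow {u w : V} (hu : u ∈ S) (hw : w ∈ S) (huw : u ≠ w)
    {a : G u} {b : G w} (ha : a ≠ 1) (hb : b ≠ 1) (n : ℕ) :
    reducedLength (retraction S hS ((gpOf Γ G u a * gpOf Γ G w b) ^ n)) = 2 * n := by
  have huw' : (⟨u, hu⟩ : S) ≠ ⟨w, hw⟩ := by simpa using huw
  simpa [retractionLetter_of_mem hu, retractionLetter_of_mem hw] using
    reducedLength_pow_of_mul_of huw' ha hb n

/-- Cayley edges are right multiplications by generators, while the reduced length is controlled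
under left multiplication: hence the inverses. -/
lemma reducedLength_retraction_inv_le_of_adj {x y : graphProduct Γ G}
    (h : (cayley (vertexGens Γ G)).Adj x y) :
    reducedLength (retraction S hS x⁻¹) ≤ reducedLength (retraction S hS y⁻¹) + 1 := by
  obtain ⟨-, h | h⟩ := h
  · obtain ⟨p, ⟨a, ha⟩, -⟩ := Set.mem_iUnion.1 h
    have hx : x⁻¹ = gpOf Γ G p a * y⁻¹ := by rw [ha]; group
    rw [hx]
    exact reducedLength_retraction_gpOf_mul_le hS a _
  · obtain ⟨p, ⟨a, ha⟩, -⟩ := Set.mem_iUnion.1 h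
    have hx : x⁻¹ = gpOf Γ G p a⁻¹ * y⁻¹ := by rw [map_inv, ha]; group
    rw [hx]
    exact reducedLength_retraction_gpOf_mul_le hS a⁻¹ _

end Retraction

open Monoid.CoprodI in
theorem exists_forall_lt_dist_of_not_adj {V : Type*} {Γ : SimpleGraph V} {G : V → Type*}
    [∀ v, Group (G v)] [∀ v, Nontrivial (G v)] {Φ Ψ : Set V} {u w : V} (hu : u ∈ Φ)
    (hw : w ∈ Φ) (huw : u ≠ w) (hadj : ¬Γ.Adj u w) (hΨ : ¬(u ∈ Ψ ∧ w ∈ Ψ)) (C : ℕ) :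
    ∃ x ∈ parabolic Γ G Φ, ∀ y ∈ parabolic Γ G Ψ, C < (cayley (vertexGens Γ G)).dist x y := by
  classical
  have hS : Γ.IsIndepSet {u, w} := Set.pairwise_pair.2 fun _ => ⟨hadj, fun h => hadj h.symm⟩
  obtain ⟨s, hs⟩ : ∃ s : ({u, w} : Set V), Ψ ∩ {u, w} ⊆ {(s : V)} := by
    by_cases huΨ : u ∈ Ψ
    · exact ⟨⟨u, by simp⟩, fun p ⟨hp, hpS⟩ => hpS.resolve_right fun h => hΨ ⟨huΨ, h ▸ hp⟩⟩
    · exact ⟨⟨w, by simp⟩, fun p ⟨hp, hpS⟩ => hpS.resolve_left fun h => huΨ (h ▸ hp)⟩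
  obtain ⟨g, hgΦ, hg⟩ : ∃ g ∈ parabolic Γ G Φ,
      reducedLength (retraction {u, w} hS g) = 2 * (C + 1) := by
    obtain ⟨a, ha⟩ := exists_ne (1 : G u)
    obtain ⟨b, hb⟩ := exists_ne (1 : G w)
    exact ⟨_, pow_mem (mul_mem (gpOf_mem_parabolic hu a) (gpOf_mem_parabolic hw b)) _,
      reducedLength_retraction_pow hS (by simp) (by simp) huw ha hb (C + 1)⟩
  refine ⟨g⁻¹, inv_mem hgΦ, fun y hy => ?_⟩
  have hy := reducedLength_retraction_le_one hS s hs (inv_mem hy)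
  have hstep := fun x y (h : (cayley (vertexGens Γ G)).Adj x y) =>
    reducedLength_retraction_inv_le_of_adj hS h
  have hlip := ((cayley_connected closure_vertexGens).preconnected g⁻¹ y).le_add_dist hstep
  rw [inv_inv] at hlip
  omega

lemma hausdorffLEN_iff {X : Type*} {Γ : SimpleGraph X} {A B : Set X} {C : ℕ} :
    HausdorffLEN Γ A B C ↔
      (∀ a ∈ A, ∃ b ∈ B, Γ.dist a b ≤ C) ∧ (∀ b ∈ B, ∃ a ∈ A, Γ.dist b a ≤ C) := by
  simp only [HausdorffLEN, SimpleGraph.dist_comm]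

section Join

variable {V : Type*} {Γ : SimpleGraph V} {G : V → Type*} [∀ v, Group (G v)]

lemma adj_of_mem_complete_of_mem_join {Ψ₀ Ψ₁ : Set V} (hjoin : ∀ a ∈ Ψ₀, ∀ b ∈ Ψ₁, Γ.Adj a b)
    (hcomplete : IsCompleteSet Γ Ψ₁) {u v : V} (hu : u ∈ Ψ₁) (hv : v ∈ Ψ₀ ∪ Ψ₁) (hvu : v ≠ u) :
    Γ.Adj u v := by
  rcases hv with hv | hv
  · exact (hjoin v hv u hu).symm
  · exact hcomplete u hu v hv hvu.symm

lemma subset_of_forall_exists_dist_le [∀ v, Nontrivial (G v)] {Φ Φ₀ Ψ₀ Ψ₁ : Set V}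
    (hΦ₀ : Φ₀ ⊆ Φ) (hnostar : ¬∃ u ∈ Φ₀, ∀ v ∈ Φ₀, v ≠ u → Γ.Adj u v)
    (hjoin : ∀ a ∈ Ψ₀, ∀ b ∈ Ψ₁, Γ.Adj a b) (hcomplete : IsCompleteSet Γ Ψ₁) {C : ℕ}
    (h : ∀ x ∈ parabolic Γ G Φ, ∃ y ∈ parabolic Γ G (Ψ₀ ∪ Ψ₁),
      (cayley (vertexGens Γ G)).dist x y ≤ C) :
    Φ₀ ⊆ Ψ₀ := by
  intro u hu
  by_contra huΨ
  obtain ⟨w, hw, hwu, hadj⟩ : ∃ w ∈ Φ₀, w ≠ u ∧ ¬Γ.Adj u w := by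
    by_contra! hstar
    exact hnostar ⟨u, hu, hstar⟩
  have hΨ : ¬(u ∈ Ψ₀ ∪ Ψ₁ ∧ w ∈ Ψ₀ ∪ Ψ₁) := fun ⟨hu', hw'⟩ =>
    hadj (adj_of_mem_complete_of_mem_join hjoin hcomplete (hu'.resolve_left huΨ) hw' hwu)
  obtain ⟨x, hx, hfar⟩ :=
    exists_forall_lt_dist_of_not_adj (G := G) (hΦ₀ hu) (hΦ₀ hw) hwu.symm hadj hΨ C
  obtain ⟨y, hy, hxy⟩ := h x hx
  exact (hfar y hy).not_ge hxy

lemma exists_dist_le_card_of_subset [Fintype V] {Φ₀ Φ₁ Ψ : Set V}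
    (hjoin : ∀ a ∈ Φ₀, ∀ b ∈ Φ₁, Γ.Adj a b) (hcomplete : IsCompleteSet Γ Φ₁) (h : Φ₀ ⊆ Ψ) :
    ∀ x ∈ parabolic Γ G (Φ₀ ∪ Φ₁), ∃ y ∈ parabolic Γ G Ψ,
      (cayley (vertexGens Γ G)).dist x y ≤ Fintype.card V := by
  intro x hx
  obtain ⟨y, hy, z, hz, rfl⟩ := exists_mul_eq_of_mem_parabolic_union hjoin hx
  obtain ⟨T, rfl⟩ := Φ₁.toFinite.exists_finset_coe
  refine ⟨y, parabolic_mono h hy, ?_⟩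
  rw [SimpleGraph.dist_comm]
  exact (dist_mul_le_card_of_mem_parabolic T hcomplete hz y).trans T.card_le_univ

end Join

theorem parabolic_hausdorff_finite_iff_general
    {V : Type*} [Fintype V] (Γ : SimpleGraph V) (G : V → Type*)
    [∀ v, Group (G v)] [∀ v, Nontrivial (G v)]
    (Φ Φ₀ Φ₁ Ψ Ψ₀ Ψ₁ : Set V)
    (hΦsplit : Φ₀ ∪ Φ₁ = Φ)
    (hΦjoin : ∀ a ∈ Φ₀, ∀ b ∈ Φ₁, Γ.Adj a b)
    (hΦcomplete : IsCompleteSet Γ Φ₁)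
    (hΦnostar : ¬ ∃ u ∈ Φ₀, ∀ v ∈ Φ₀, v ≠ u → Γ.Adj u v)
    (hΨsplit : Ψ₀ ∪ Ψ₁ = Ψ)
    (hΨjoin : ∀ a ∈ Ψ₀, ∀ b ∈ Ψ₁, Γ.Adj a b)
    (hΨcomplete : IsCompleteSet Γ Ψ₁)
    (hΨnostar : ¬ ∃ u ∈ Ψ₀, ∀ v ∈ Ψ₀, v ≠ u → Γ.Adj u v) :
    (∃ C : ℕ, HausdorffLEN (cayley (vertexGens Γ G))
        (parabolic Γ G Φ : Set (graphProduct Γ G))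
        (parabolic Γ G Ψ : Set (graphProduct Γ G)) C) ↔
      Φ₀ = Ψ₀ := by
  subst hΦsplit hΨsplit
  simp only [hausdorffLEN_iff, SetLike.mem_coe]
  constructor
  · rintro ⟨C, hΦΨ, hΨΦ⟩
    exact (subset_of_forall_exists_dist_le Set.subset_union_left hΦnostar hΨjoin hΨcomplete
      hΦΨ).antisymm
      (subset_of_forall_exists_dist_le Set.subset_union_left hΨnostar hΦjoin hΦcomplete hΨΦ)
  · rintro rfl
    exact ⟨Fintype.card V,
      exists_dist_le_card_of_subset hΦjoin hΦcomplete Set.subset_union_left,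
      exists_dist_le_card_of_subset hΨjoin hΨcomplete Set.subset_union_left⟩

/-- **(Corollary 2.17.)** Let `Φ = Φ₀ ∗ Φ₁` and `Ψ = Ψ₀ ∗ Ψ₁` with `Φ₁, Ψ₁` complete and
`Φ₀, Ψ₀` not the star of one of their vertices. The Hausdorff distance between the parabolic
subgroups `⟨Φ⟩` and `⟨Ψ⟩` in `X(Γ, 𝒢)` is finite if and only if `Φ₀ = Ψ₀`. -/
theorem parabolic_hausdorff_finite_iff
    {V : Type*} [Fintype V] (Γ : SimpleGraph V) (G : V → Type*)
    [∀ v, Group (G v)] [∀ v, Nontrivial (G v)]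
    (Φ Φ₀ Φ₁ Ψ Ψ₀ Ψ₁ : Set V)
    (hΦsplit : Φ₀ ∪ Φ₁ = Φ) (hΦdisj : Disjoint Φ₀ Φ₁)
    (hΦjoin : ∀ a ∈ Φ₀, ∀ b ∈ Φ₁, Γ.Adj a b)
    (hΦcomplete : IsCompleteSet Γ Φ₁)
    (hΦnostar : ¬ ∃ u ∈ Φ₀, ∀ v ∈ Φ₀, v ≠ u → Γ.Adj u v)
    (hΨsplit : Ψ₀ ∪ Ψ₁ = Ψ) (hΨdisj : Disjoint Ψ₀ Ψ₁)
    (hΨjoin : ∀ a ∈ Ψ₀, ∀ b ∈ Ψ₁, Γ.Adj a b)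
    (hΨcomplete : IsCompleteSet Γ Ψ₁)
    (hΨnostar : ¬ ∃ u ∈ Ψ₀, ∀ v ∈ Ψ₀, v ≠ u → Γ.Adj u v) :
    (∃ C : ℕ, HausdorffLEN (cayley (vertexGens Γ G))
        (parabolic Γ G Φ : Set (graphProduct Γ G))
        (parabolic Γ G Ψ : Set (graphProduct Γ G)) C) ↔
      Φ₀ = Ψ₀ :=
  parabolic_hausdorff_finite_iff_general Γ G Φ Φ₀ Φ₁ Ψ Ψ₀ Ψ₁ hΦsplit hΦjoin hΦcomplete hΦnostar
    hΨsplit hΨjoin hΨcomplete hΨnostar
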